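/- Let b_a(c) = ∫₀¹ σ(a(c - z)) dz and ψ_a(c) = ∫₀¹ σ(a(c-z))² dz - b_a(c)², with σ the logistic sigmoid. Then for all a > 0 and c ∈ ℝ, ψ_a(c) = b_a(c)(1 - b_a(c)) - (1/a)(σ(ac) - σ(a(c-1))). -/

import Mathlib

noncomputable def logistic (x : ℝ) : ℝ := 1 / (1 + Real.exp (-x))

noncomputable def bMean (a c : ℝ) : ℝ := ∫ z in (0:ℝ)..1, logistic (a * (c - z))

noncomputable def psiVar (a c : ℝ) : ℝ :=
  (∫ z in (0:ℝ)..1, (logistic (a * (c - z))) ^ 2) - (bMean a c) ^ 2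

lemma one_add_exp_pos (x : ℝ) : (0:ℝ) < 1 + Real.exp (-x) := by positivity

lemma hasDerivAt_logistic (x : ℝ) :
    HasDerivAt logistic (logistic x * (1 - logistic x)) x := by
  have h1 : HasDerivAt (fun x : ℝ => 1 + Real.exp (-x)) (-Real.exp (-x)) x := by
    have := (Real.hasDerivAt_exp (-x)).comp x (hasDerivAt_neg x)
    simpa using (this.const_add 1)
  have h2 := h1.inv (ne_of_gt (one_add_exp_pos x))
  have : HasDerivAt logistic (-(-Real.exp (-x)) / (1 + Real.exp (-x)) ^ 2) x := by
    have e : logistic = (fun x : ℝ => 1 + Real.exp (-x))⁻¹ := by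
      funext y; simp [logistic, one_div]
    rw [e]; exact h2
  refine this.congr_deriv ?_
  have hpos := one_add_exp_pos x
  simp only [logistic]
  field_simp
  ring

lemma continuous_logistic : Continuous logistic := by
  unfold logistic
  exact continuous_const.div (by continuity) (fun x => ne_of_gt (one_add_exp_pos x))

theorem psiVar_eq (a c : ℝ) (ha : 0 < a) :
    psiVar a c = bMean a c * (1 - bMean a c)
      - (1 / a) * (logistic (a * c) - logistic (a * (c - 1))) := by
  set L : ℝ → ℝ := fun z => logistic (a * (c - z)) with hL
  have hderiv : ∀ z ∈ Set.uIcc (0:ℝ) 1,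
      HasDerivAt L (a * ((L z) ^ 2 - L z)) z := by
    intro z _
    have h1 : HasDerivAt (fun z : ℝ => a * (c - z)) (-a) z := by
      have := ((hasDerivAt_id z).const_sub c).const_mul a
      simpa using this
    have := (hasDerivAt_logistic (a * (c - z))).comp z h1
    refine this.congr_deriv ?_
    simp only [hL]
    ring
  have hcont : ContinuousOn (fun z => a * ((L z) ^ 2 - L z)) (Set.uIcc (0:ℝ) 1) := by
    apply Continuous.continuousOn
    have : Continuous L := continuous_logistic.comp (by continuity)
    continuity
  have hftc := intervalIntegral.integral_eq_sub_of_hasDerivAt hderiv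
    (hcont.intervalIntegrable)
  have hLcont : Continuous L := continuous_logistic.comp (by continuity)
  have hint1 : IntervalIntegrable (fun z => (L z) ^ 2) MeasureTheory.volume 0 1 :=
    ((hLcont.pow 2).continuousOn).intervalIntegrable
  have hint2 : IntervalIntegrable L MeasureTheory.volume 0 1 :=
    (hLcont.continuousOn).intervalIntegrable
  have hsplit : (∫ z in (0:ℝ)..1, a * ((L z) ^ 2 - L z))
      = a * ((∫ z in (0:ℝ)..1, (L z) ^ 2) - ∫ z in (0:ℝ)..1, L z) := by
    rw [intervalIntegral.integral_const_mul, intervalIntegral.integral_sub hint1 hint2]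
  have key : (∫ z in (0:ℝ)..1, (L z) ^ 2) - (∫ z in (0:ℝ)..1, L z)
      = (1 / a) * (L 1 - L 0) := by
    have := hftc
    rw [hsplit] at this
    field_simp
    linarith [this]
  have hL1 : L 1 = logistic (a * (c - 1)) := rfl
  have hL0 : L 0 = logistic (a * c) := by simp [hL]
  have hb : bMean a c = ∫ z in (0:ℝ)..1, L z := rfl
  have hp : psiVar a c = (∫ z in (0:ℝ)..1, (L z) ^ 2) - (bMean a c) ^ 2 := rfl
  rw [hp, hb]
  have h2 : (∫ z in (0:ℝ)..1, (L z) ^ 2)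
      = (∫ z in (0:ℝ)..1, L z) + (1 / a) * (L 1 - L 0) := by linarith [key]
  rw [h2, hL1, hL0]
  ring
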